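/- arXiv:1712.08592 — 4 statements merged into one kernel-verified Lean document; each statement's English description precedes it below -/
import Mathlib

section
/- Let (p_n) and (q_n) be Nörlund sequences with comparison coefficients (k_n). Define the matrix c_{m,n} = k_{m-n} P_n / Q_m for n ≤ m and c_{m,n} = 0 for n > m. Then for every sequence r, (N^q r)_m = Σ_{n=0}^∞ c_{m,n} (N^p r)_n for all m. -/
/-!
Both Nörlund means are discrete convolutions divided by partial sums. Cancelling `P n`, the
numerator of `∑ₙ c m n (N^p r)ₙ` is the convolution `k * (p * r)` evaluated at `m`; by
associativity of convolution (multiplication of formal power series) it equals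
`(k * p) * r = q * r` at `m`, the numerator of `(N^q r)ₘ`.
-/

open Finset PowerSeries

section Convolution

variable {R : Type*} [CommSemiring R]

theorem PowerSeries.coeff_mk_mul_mk (a b : ℕ → R) (n : ℕ) :
    coeff n (mk a * mk b) = ∑ j ∈ range (n + 1), a j * b (n - j) := by
  rw [coeff_mul,
    Nat.sum_antidiagonal_eq_sum_range_succ (fun i j => coeff i (mk a) * coeff j (mk b))]
  simp only [coeff_mk]

theorem PowerSeries.coeff_mk_mul_mk' (a b : ℕ → R) (n : ℕ) :
    coeff n (mk a * mk b) = ∑ j ∈ range (n + 1), a (n - j) * b j := by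
  rw [mul_comm, coeff_mk_mul_mk]
  exact sum_congr rfl fun _ _ => mul_comm _ _

theorem sum_range_sub_mul_sum_range_sub_mul {k p q : ℕ → R}
    (hk : ∀ n, q n = ∑ j ∈ range (n + 1), k j * p (n - j)) (r : ℕ → R) (m : ℕ) :
    ∑ n ∈ range (m + 1), k (m - n) * ∑ j ∈ range (n + 1), p (n - j) * r j =
      ∑ j ∈ range (m + 1), q (m - j) * r j := by
  have hq : mk q = mk k * mk p := by
    ext n
    rw [coeff_mk, coeff_mk_mul_mk, hk]
  have hpr : mk (fun n => ∑ j ∈ range (n + 1), p (n - j) * r j) = mk p * mk r := by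
    ext n
    rw [coeff_mk, coeff_mk_mul_mk']
  rw [← coeff_mk_mul_mk', hpr, ← coeff_mk_mul_mk', hq, mul_assoc]

end Convolution

theorem sum_range_succ_pos {M : Type*} [AddCommMonoid M] [PartialOrder M]
    [IsOrderedCancelAddMonoid M] {p : ℕ → M} (hp0 : 0 < p 0) (hp : ∀ n, 0 < n → 0 ≤ p n)
    (n : ℕ) : 0 < ∑ i ∈ range (n + 1), p i := by
  rw [sum_range_succ']
  exact add_pos_of_nonneg_of_pos (sum_nonneg fun i _ => hp _ i.succ_pos) hp0

theorem norlund_mean_matrix_form_general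
    (p q k : ℕ → ℝ)
    (hp0 : 0 < p 0) (hp : ∀ n, 0 < n → 0 ≤ p n)
    (hk : ∀ n, q n = ∑ j ∈ Finset.range (n + 1), k j * p (n - j))
    (P Q : ℕ → ℝ)
    (hP : ∀ n, P n = ∑ i ∈ Finset.range (n + 1), p i)
    (c : ℕ → ℕ → ℝ)
    (hc : ∀ m n, c m n = if n ≤ m then k (m - n) * P n / Q m else 0)
    (r : ℕ → ℝ) (Np Nq : ℕ → ℝ)
    (hNp : ∀ m, Np m = (∑ j ∈ Finset.range (m + 1), p (m - j) * r j) / P m)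
    (hNq : ∀ m, Nq m = (∑ j ∈ Finset.range (m + 1), q (m - j) * r j) / Q m) :
    ∀ m, Nq m = ∑' n, c m n * Np n := by
  intro m
  have hP_ne n : P n ≠ 0 := (hP n ▸ sum_range_succ_pos hp0 hp n).ne'
  rw [tsum_eq_sum (s := range (m + 1))
    fun n hn => by rw [hc, if_neg (by simpa [Nat.lt_succ_iff] using hn), zero_mul]]
  calc Nq m = (∑ n ∈ range (m + 1),
          k (m - n) * ∑ j ∈ range (n + 1), p (n - j) * r j) / Q m := by
        rw [hNq, sum_range_sub_mul_sum_range_sub_mul hk]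
    _ = ∑ n ∈ range (m + 1), c m n * Np n := by
        rw [sum_div]
        refine sum_congr rfl fun n hn => ?_
        rw [hc, if_pos (mem_range_succ_iff.1 hn), hNp]
        field_simp [hP_ne n]

theorem norlund_mean_matrix_form
    (p q k : ℕ → ℝ)
    (hp0 : 0 < p 0) (hp : ∀ n, 0 < n → 0 ≤ p n)
    (hq0 : 0 < q 0) (hq : ∀ n, 0 < n → 0 ≤ q n)
    (hk : ∀ n, q n = ∑ j ∈ Finset.range (n + 1), k j * p (n - j))
    (P Q : ℕ → ℝ)
    (hP : ∀ n, P n = ∑ i ∈ Finset.range (n + 1), p i)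
    (hQ : ∀ n, Q n = ∑ i ∈ Finset.range (n + 1), q i)
    (c : ℕ → ℕ → ℝ)
    (hc : ∀ m n, c m n = if n ≤ m then k (m - n) * P n / Q m else 0)
    (r : ℕ → ℝ) (Np Nq : ℕ → ℝ)
    (hNp : ∀ m, Np m = (∑ j ∈ Finset.range (m + 1), p (m - j) * r j) / P m)
    (hNq : ∀ m, Nq m = (∑ j ∈ Finset.range (m + 1), q (m - j) * r j) / Q m) :
    ∀ m, Nq m = ∑' n, c m n * Np n :=
  norlund_mean_matrix_form_general p q k hp0 hp hk P Q hP c hc r Np Nq hNp hNq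
end

section
/- Let C be the linear summation method given by a row-finite matrix [c_{m,n}]. If (i) there is H ≥ 0 with Σ_n |c_{m,n}| ≤ H for all m, (ii) lim_{m→∞} c_{m,n} = 0 for each n, and (iii) lim_{m→∞} Σ_n c_{m,n} = 1, then for every convergent sequence s with limit σ, the transformed sequence t_m = Σ_n c_{m,n} s_n converges to σ. -/
open Filter

theorem silverman_toeplitz_sufficiency
    (c : ℕ → ℕ → ℝ)
    (hrow : ∀ m, Summable (fun n => |c m n|))
    (H : ℝ) (hH : 0 ≤ H)
    (h1 : ∀ m, ∑' n, |c m n| ≤ H)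
    (h2 : ∀ n, Filter.Tendsto (fun m => c m n) Filter.atTop (nhds 0))
    (h3 : Filter.Tendsto (fun m => ∑' n, c m n) Filter.atTop (nhds 1))
    (s : ℕ → ℝ) (σ : ℝ) (hs : Filter.Tendsto s Filter.atTop (nhds σ)) :
    Filter.Tendsto (fun m => ∑' n, c m n * s n) Filter.atTop (nhds σ) := by
  obtain ⟨d, hd⟩ : ∃ d : ℕ → ℝ, ∀ n, d n = s n - σ := ⟨fun n => s n - σ, fun _ => rfl⟩
  -- small d beyond a point
  have hsmall : ∀ δ : ℝ, 0 < δ → ∃ N, ∀ n ≥ N, |d n| ≤ δ := by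
    intro δ hδ
    obtain ⟨N, hN⟩ := Metric.tendsto_atTop.mp hs δ hδ
    exact ⟨N, fun n hn => by
      rw [hd n]
      exact le_of_lt (by simpa [Real.dist_eq] using hN n hn)⟩
  -- d is bounded
  obtain ⟨N0, hN0⟩ := hsmall 1 one_pos
  obtain ⟨K, hKdef⟩ : ∃ K : ℝ, K = 1 + ∑ i ∈ Finset.range N0, |d i| := ⟨_, rfl⟩
  have hKd : ∀ n, |d n| ≤ K := by
    intro n
    rcases lt_or_ge n N0 with h | h
    · have h' : |d n| ≤ ∑ i ∈ Finset.range N0, |d i| :=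
        Finset.single_le_sum (f := fun i => |d i|) (fun i _ => abs_nonneg (d i))
          (Finset.mem_range.mpr h)
      rw [hKdef]; linarith
    · have h' : (0:ℝ) ≤ ∑ i ∈ Finset.range N0, |d i| :=
        Finset.sum_nonneg fun i _ => abs_nonneg _
      have := hN0 n h
      rw [hKdef]; linarith
  -- summabilities
  have hsumc : ∀ m, Summable (fun n => c m n) := fun m => (hrow m).of_abs
  have hsumd : ∀ m, Summable (fun n => c m n * d n) := by
    intro m
    apply Summable.of_abs
    apply Summable.of_nonneg_of_le (fun n => abs_nonneg _) (fun n => ?_) ((hrow m).mul_right K)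
    rw [abs_mul]
    exact mul_le_mul_of_nonneg_left (hKd n) (abs_nonneg _)
  -- key: the sum against d tends to 0
  have key : Tendsto (fun m => ∑' n, c m n * d n) atTop (nhds 0) := by
    rw [NormedAddCommGroup.tendsto_nhds_zero]
    intro ε hε
    obtain ⟨ε', hε'def⟩ : ∃ x : ℝ, x = ε / (2 * (H + 1)) := ⟨_, rfl⟩
    have hε'pos : 0 < ε' := by rw [hε'def]; positivity
    obtain ⟨N, hN⟩ := hsmall ε' hε'pos
    -- head tends to 0
    have hhead : Tendsto (fun m => ∑ i ∈ Finset.range N, c m i * d i) atTop (nhds 0) := by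
      have h' : Tendsto (fun m => ∑ i ∈ Finset.range N, c m i * d i) atTop
          (nhds (∑ i ∈ Finset.range N, 0 * d i)) :=
        tendsto_finset_sum _ (fun i _ => (h2 i).mul_const (d i))
      simpa using h'
    have hev : ∀ᶠ m in atTop, |∑ i ∈ Finset.range N, c m i * d i| < ε / 2 := by
      obtain ⟨M, hM⟩ := Metric.tendsto_atTop.mp hhead (ε / 2) (by positivity)
      filter_upwards [eventually_ge_atTop M] with m hm
      simpa [Real.dist_eq] using hM m hm
    filter_upwards [hev] with m hm
    have hsplit : ∑ i ∈ Finset.range N, c m i * d i + ∑' n, c m (n + N) * d (n + N)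
        = ∑' n, c m n * d n := Summable.sum_add_tsum_nat_add N (hsumd m)
    have htailsum : Summable (fun n => c m (n + N) * d (n + N)) :=
      (summable_nat_add_iff N).mpr (hsumd m)
    have htailabs : Summable (fun n => |c m (n + N) * d (n + N)|) := htailsum.abs
    have habs_shift : Summable (fun n => |c m (n + N)|) :=
      (summable_nat_add_iff (f := fun n => |c m n|) N).mpr (hrow m)
    have htail : |∑' n, c m (n + N) * d (n + N)| ≤ ε' * H := by
      have step1 : |∑' n, c m (n + N) * d (n + N)| ≤ ∑' n, |c m (n + N) * d (n + N)| := by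
        have h' := norm_tsum_le_tsum_norm (f := fun n => c m (n + N) * d (n + N))
          (by simpa only [Real.norm_eq_abs] using htailabs)
        simpa only [Real.norm_eq_abs] using h'
      have step2 : ∑' n, |c m (n + N) * d (n + N)| ≤ ∑' n, |c m (n + N)| * ε' := by
        apply Summable.tsum_le_tsum _ htailabs (habs_shift.mul_right ε')
        intro n
        rw [abs_mul]
        exact mul_le_mul_of_nonneg_left (hN (n + N) (Nat.le_add_left N n)) (abs_nonneg _)
      have step3 : ∑' n, |c m (n + N)| * ε' = ε' * ∑' n, |c m (n + N)| := by
        rw [tsum_mul_right, mul_comm]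
      have step4 : ∑' n, |c m (n + N)| ≤ H := by
        have hsplit2 : ∑ i ∈ Finset.range N, |c m i| + ∑' n, |c m (n + N)|
            = ∑' n, |c m n| := Summable.sum_add_tsum_nat_add N (hrow m)
        have hnn : (0:ℝ) ≤ ∑ i ∈ Finset.range N, |c m i| :=
          Finset.sum_nonneg fun i _ => abs_nonneg _
        have := h1 m
        linarith
      have step5 : ε' * ∑' n, |c m (n + N)| ≤ ε' * H :=
        mul_le_mul_of_nonneg_left step4 (le_of_lt hε'pos)
      linarith
    have hεH : ε' * H ≤ ε / 2 := by
      rw [hε'def, div_mul_eq_mul_div, div_le_div_iff₀ (by positivity) (by norm_num)]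
      nlinarith
    have habs : |∑' n, c m n * d n|
        ≤ |∑ i ∈ Finset.range N, c m i * d i| + |∑' n, c m (n + N) * d (n + N)| := by
      rw [← hsplit]; exact abs_add_le _ _
    have : ‖∑' n, c m n * d n‖ = |∑' n, c m n * d n| := rfl
    rw [this]
    linarith
  -- combine
  have heq : ∀ m, ∑' n, c m n * s n = (∑' n, c m n * d n) + σ * ∑' n, c m n := by
    intro m
    have hpt : ∀ n, c m n * s n = c m n * d n + σ * c m n := by
      intro n; rw [hd n]; ring
    rw [tsum_congr hpt, Summable.tsum_add (hsumd m) ((hsumc m).mul_left σ), tsum_mul_left]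
  have hfinal : Tendsto (fun m => (∑' n, c m n * d n) + σ * ∑' n, c m n) atTop
      (nhds (0 + σ * 1)) := key.add (h3.const_mul σ)
  rw [funext heq]
  simpa using hfinal
end

section
/- Let (p_n) and (q_n) be Nörlund sequences with comparison matrix C_{pq} given by c_{m,n} = k_{m-n} P_n / Q_m (n ≤ m), 0 otherwise. If (N,q) includes (N,p) (every (N,p)-convergent sequence is (N,q)-convergent to the same limit), then C_{pq} is regular: for every convergent sequence s → σ, the sequence t_m = Σ_{n=0}^m c_{m,n} s_n converges to σ. -/
/-!
Write the `(N,p)`- and `(N,q)`-means of `r` as `N^p r / P` and `N^q r / Q`, where `N^p` is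
convolution with `p`. Since `p 0 ≠ 0`, `N^p` is invertible (a lower triangular system), so a
convergent `s` can be written `P s = N^p r`. Because `q = k ⋆ p`, associativity and commutativity
of convolution give `N^q r = N^k (N^p r) = N^k (P s)`, and `N^k (P s) / Q` is the `C_{pq}`-transform
of `s`. So the `C_{pq}`-transform of `s` is the `(N,q)`-mean of `r`, and the `(N,p)`-mean of `r`
is `s`, which tends to `σ`.
-/

open Finset

def norlundTransform {R : Type*} [Semiring R] (p r : ℕ → R) (m : ℕ) : R :=
  ∑ j ∈ range (m + 1), p (m - j) * r j

def norlundSolve {K : Type*} [Field K] (p b : ℕ → K) : ℕ → K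
  | n => (b n - ∑ j ∈ (range n).attach, p (n - j.1) * norlundSolve p b j.1) / p 0
  decreasing_by exact mem_range.1 j.2

theorem norlundTransform_norlundSolve {K : Type*} [Field K] (p b : ℕ → K) (hp0 : p 0 ≠ 0) :
    norlundTransform p (norlundSolve p b) = b := by
  funext n
  rw [norlundTransform, sum_range_succ, Nat.sub_self, norlundSolve,
    sum_attach (range n) fun j => p (n - j) * norlundSolve p b j]
  field_simp
  ring

section Convolution

variable {R : Type*} [CommSemiring R]

theorem PowerSeries.mk_norlundTransform (p r : ℕ → R) :
    PowerSeries.mk (norlundTransform p r) = PowerSeries.mk r * PowerSeries.mk p := by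
  ext n
  rw [PowerSeries.coeff_mul, Nat.sum_antidiagonal_eq_sum_range_succ_mk, PowerSeries.coeff_mk,
    norlundTransform]
  simp only [PowerSeries.coeff_mk, mul_comm]

theorem norlundTransform_norlundTransform (p k r : ℕ → R) :
    norlundTransform (norlundTransform p k) r = norlundTransform k (norlundTransform p r) := by
  have h : PowerSeries.mk (norlundTransform (norlundTransform p k) r) =
      PowerSeries.mk (norlundTransform k (norlundTransform p r)) := by
    simp only [PowerSeries.mk_norlundTransform]
    ring
  funext n
  simpa using congrArg (PowerSeries.coeff n) h

end Convolution

theorem inclusion_implies_matrix_regular_general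
    (p q k : ℕ → ℝ)
    (hp0 : 0 < p 0) (hp : ∀ n, 0 < n → 0 ≤ p n)
    (hk : ∀ n, q n = ∑ j ∈ Finset.range (n + 1), k j * p (n - j))
    (P Q : ℕ → ℝ)
    (hP : ∀ n, P n = ∑ i ∈ Finset.range (n + 1), p i)
    (c : ℕ → ℕ → ℝ)
    (hc : ∀ m n, c m n = if n ≤ m then k (m - n) * P n / Q m else 0)
    (hincl : ∀ (r : ℕ → ℝ) (σ : ℝ),
      Filter.Tendsto
        (fun m => (∑ j ∈ Finset.range (m + 1), p (m - j) * r j) / P m)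
        Filter.atTop (nhds σ) →
      Filter.Tendsto
        (fun m => (∑ j ∈ Finset.range (m + 1), q (m - j) * r j) / Q m)
        Filter.atTop (nhds σ)) :
    ∀ (s : ℕ → ℝ) (σ : ℝ), Filter.Tendsto s Filter.atTop (nhds σ) →
      Filter.Tendsto (fun m => ∑ n ∈ Finset.range (m + 1), c m n * s n)
        Filter.atTop (nhds σ) := by
  intro s σ hs
  have hP_pos (n : ℕ) : 0 < P n := by
    rw [hP, sum_range_succ']
    exact add_pos_of_nonneg_of_pos (sum_nonneg fun i _ => hp _ i.succ_pos) hp0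
  have hq : q = norlundTransform p k := funext fun n => by
    simp only [hk, norlundTransform, mul_comm]
  set r := norlundSolve p (fun n => P n * s n)
  have hr : norlundTransform p r = fun n => P n * s n :=
    norlundTransform_norlundSolve p _ hp0.ne'
  have hNp : Filter.Tendsto (fun m => norlundTransform p r m / P m) Filter.atTop (nhds σ) := by
    refine hs.congr fun m => ?_
    rw [hr, mul_div_cancel_left₀ _ (hP_pos m).ne']
  refine (hincl r σ hNp).congr fun m => ?_
  change norlundTransform q r m / Q m = _
  rw [hq, norlundTransform_norlundTransform, hr, norlundTransform, sum_div]
  refine sum_congr rfl fun n hn => ?_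
  rw [hc, if_pos (Nat.lt_succ_iff.mp (mem_range.mp hn))]
  ring

theorem inclusion_implies_matrix_regular
    (p q k : ℕ → ℝ)
    (hp0 : 0 < p 0) (hp : ∀ n, 0 < n → 0 ≤ p n)
    (hq0 : 0 < q 0) (hq : ∀ n, 0 < n → 0 ≤ q n)
    (hk : ∀ n, q n = ∑ j ∈ Finset.range (n + 1), k j * p (n - j))
    (P Q : ℕ → ℝ)
    (hP : ∀ n, P n = ∑ i ∈ Finset.range (n + 1), p i)
    (hQ : ∀ n, Q n = ∑ i ∈ Finset.range (n + 1), q i)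
    (c : ℕ → ℕ → ℝ)
    (hc : ∀ m n, c m n = if n ≤ m then k (m - n) * P n / Q m else 0)
    (hincl : ∀ (r : ℕ → ℝ) (σ : ℝ),
      Filter.Tendsto
        (fun m => (∑ j ∈ Finset.range (m + 1), p (m - j) * r j) / P m)
        Filter.atTop (nhds σ) →
      Filter.Tendsto
        (fun m => (∑ j ∈ Finset.range (m + 1), q (m - j) * r j) / Q m)
        Filter.atTop (nhds σ)) :
    ∀ (s : ℕ → ℝ) (σ : ℝ), Filter.Tendsto s Filter.atTop (nhds σ) →
      Filter.Tendsto (fun m => ∑ n ∈ Finset.range (m + 1), c m n * s n)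
        Filter.atTop (nhds σ) :=
  inclusion_implies_matrix_regular_general p q k hp0 hp hk P Q hP c hc hincl
end

section
/- Let (p_n), (q_n) be Nörlund sequences with comparison coefficients (k_n). Suppose conditions R1: there is H ≥ 0 with Σ_{n=0}^m |k_{m-n}| P_n ≤ H Q_m for all m, and R2: k_m/Q_m → 0 as m → ∞. Then the matrix c_{m,n} = k_{m-n} P_n / Q_m (n ≤ m), 0 otherwise, satisfies the three Silverman–Toeplitz regularity conditions: uniformly bounded absolute row sums, columns tending to 0, and row sums equal to 1. -/
/-!
Multiplying the defining relation `q = k * p` of the comparison coefficients by the summation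
kernel `1/(1 - x)` gives `Q_m = ∑_{n ≤ m} k_{m-n} P_n`, so every row of `c` sums to `1`. Condition
R1 is the absolute row-sum bound divided by `Q_m > 0`. For a fixed column `n`,
`|c_{m,n}| ≤ P_n |k_{m-n}| / Q_{m-n}` since `Q` is nondecreasing, and this tends to `0` by R2.
-/

open Finset Filter Topology

theorem sum_range_sum_convolution_eq {R : Type*} [Semiring R] (k p : ℕ → R) (m : ℕ) :
    ∑ n ∈ range (m + 1), ∑ j ∈ range (n + 1), k j * p (n - j) =
      ∑ n ∈ range (m + 1), k (m - n) * ∑ i ∈ range (n + 1), p i := by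
  rw [sum_range_diag_flip (m + 1) fun j i => k j * p i, ← sum_range_reflect _ (m + 1)]
  refine sum_congr rfl fun n hn => ?_
  have hnm : n ≤ m := Nat.lt_succ_iff.mp (mem_range.mp hn)
  rw [mul_sum, add_tsub_cancel_right, show m + 1 - (m - n) = n + 1 by omega]

theorem sum_range_succ_pos_s10 {f : ℕ → ℝ} (h0 : 0 < f 0) (hf : ∀ n, 0 < n → 0 ≤ f n) (m : ℕ) :
    0 < ∑ i ∈ range (m + 1), f i :=
  sum_pos' (fun i _ => i.eq_zero_or_pos.elim (fun hi => hi ▸ h0.le) (hf i)) ⟨0, by simp, h0⟩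

theorem monotone_sum_range_succ {f : ℕ → ℝ} (hf : ∀ n, 0 < n → 0 ≤ f n) :
    Monotone fun m => ∑ i ∈ range (m + 1), f i :=
  monotone_nat_of_le_succ fun m => by
    simpa [sum_range_succ _ (m + 1)] using hf (m + 1) m.succ_pos

theorem tendsto_comp_sub_div_of_monotone {a Q : ℕ → ℝ} (hQ : Monotone Q) (hQpos : ∀ m, 0 < Q m)
    (h : Tendsto (fun m => a m / Q m) atTop (𝓝 0)) (n : ℕ) :
    Tendsto (fun m => a (m - n) / Q m) atTop (𝓝 0) := by
  have hshift : Tendsto (fun m => ‖a (m - n) / Q (m - n)‖) atTop (𝓝 0) := by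
    simpa using (h.comp (tendsto_sub_atTop_nat n)).norm
  refine squeeze_zero_norm (fun m => ?_) hshift
  simp only [norm_div, Real.norm_of_nonneg (hQpos _).le]
  exact div_le_div_of_nonneg_left (norm_nonneg _) (hQpos _) (hQ (Nat.sub_le m n))

theorem riesz_conditions_imply_toeplitz_conditions_general
    (p q k : ℕ → ℝ)
    (hp0 : 0 < p 0) (hp : ∀ n, 0 < n → 0 ≤ p n)
    (hq0 : 0 < q 0) (hq : ∀ n, 0 < n → 0 ≤ q n)
    (hk : ∀ n, q n = ∑ j ∈ Finset.range (n + 1), k j * p (n - j))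
    (P Q : ℕ → ℝ)
    (hP : ∀ n, P n = ∑ i ∈ Finset.range (n + 1), p i)
    (hQ : ∀ n, Q n = ∑ i ∈ Finset.range (n + 1), q i)
    (c : ℕ → ℕ → ℝ)
    (hc : ∀ m n, c m n = if n ≤ m then k (m - n) * P n / Q m else 0)
    (H : ℝ)
    (hR1 : ∀ m, ∑ n ∈ Finset.range (m + 1), |k (m - n)| * P n ≤ H * Q m)
    (hR2 : Filter.Tendsto (fun m => k m / Q m) Filter.atTop (nhds 0)) :
    (∀ m, ∑ n ∈ Finset.range (m + 1), |c m n| ≤ H) ∧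
    (∀ n, Filter.Tendsto (fun m => c m n) Filter.atTop (nhds 0)) ∧
    (∀ m, ∑ n ∈ Finset.range (m + 1), c m n = 1) := by
  have hPpos : ∀ n, 0 < P n := fun n => hP n ▸ sum_range_succ_pos_s10 hp0 hp n
  have hQpos : ∀ m, 0 < Q m := fun m => hQ m ▸ sum_range_succ_pos_s10 hq0 hq m
  have hQmono : Monotone Q := funext hQ ▸ monotone_sum_range_succ hq
  have hrow : ∀ m, ∑ n ∈ range (m + 1), k (m - n) * P n = Q m := fun m => by
    simp only [hP, hQ, hk, sum_range_sum_convolution_eq]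
  have hcm : ∀ m, ∀ n ∈ range (m + 1), c m n = k (m - n) * P n / Q m := fun m n hn => by
    rw [hc, if_pos (Nat.lt_succ_iff.mp (mem_range.mp hn))]
  refine ⟨fun m => ?_, fun n => ?_, fun m => ?_⟩
  · rw [sum_congr rfl fun n hn => by rw [hcm m n hn, abs_div, abs_mul, abs_of_pos (hPpos n),
      abs_of_pos (hQpos m)], ← sum_div, div_le_iff₀ (hQpos m)]
    exact hR1 m
  · have hcol : Tendsto (fun m => k (m - n) / Q m * P n) atTop (𝓝 0) := by
      simpa using (tendsto_comp_sub_div_of_monotone hQmono hQpos hR2 n).mul_const (P n)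
    refine hcol.congr' ?_
    filter_upwards [eventually_ge_atTop n] with m hnm
    rw [hc, if_pos hnm, mul_div_right_comm]
  · rw [sum_congr rfl (hcm m), ← sum_div, hrow, div_self (hQpos m).ne']

theorem riesz_conditions_imply_toeplitz_conditions
    (p q k : ℕ → ℝ)
    (hp0 : 0 < p 0) (hp : ∀ n, 0 < n → 0 ≤ p n)
    (hq0 : 0 < q 0) (hq : ∀ n, 0 < n → 0 ≤ q n)
    (hk : ∀ n, q n = ∑ j ∈ Finset.range (n + 1), k j * p (n - j))
    (P Q : ℕ → ℝ)
    (hP : ∀ n, P n = ∑ i ∈ Finset.range (n + 1), p i)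
    (hQ : ∀ n, Q n = ∑ i ∈ Finset.range (n + 1), q i)
    (c : ℕ → ℕ → ℝ)
    (hc : ∀ m n, c m n = if n ≤ m then k (m - n) * P n / Q m else 0)
    (H : ℝ) (hH : 0 ≤ H)
    (hR1 : ∀ m, ∑ n ∈ Finset.range (m + 1), |k (m - n)| * P n ≤ H * Q m)
    (hR2 : Filter.Tendsto (fun m => k m / Q m) Filter.atTop (nhds 0)) :
    (∀ m, ∑ n ∈ Finset.range (m + 1), |c m n| ≤ H) ∧
    (∀ n, Filter.Tendsto (fun m => c m n) Filter.atTop (nhds 0)) ∧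
    (∀ m, ∑ n ∈ Finset.range (m + 1), c m n = 1) :=
  riesz_conditions_imply_toeplitz_conditions_general p q k hp0 hp hq0 hq hk P Q hP hQ c hc H hR1 hR2
end
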